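/- Let f be real-analytic near its simple root α. Define Chun's iteration map F(x) = x - (1/2)·(3 - f'(y(x))/f'(x))·f(x)/f'(x), where y(x) = x - f(x)/f'(x), for x near α with f'(x) ≠ 0. Then as x → α, F(x) - α = (2 c₂² + c₃/2)·(x - α)³ + O((x - α)⁴); in particular Chun's method is of third order and is the instance of the weighted Newton method x ↦ x - A(f'(y)/f'(x)) f(x)/f'(x) with weight A(t) = (3 - t)/2. -/

import Mathlib

/-!
Write `e = x - α`. Taylor expansion of `f` and `f'` at the simple root gives
`f/f' = e - c₂e² + (2c₂² - 2c₃)e³ + O(e⁴)`, so the Newton step satisfies `y - α = c₂e² + O(e³)`.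
Since `y - α = O(e²)`, the linear Taylor polynomial of `f'` at `α` already gives `f'(y)` up to
`O(e⁴)`, whence `f'(y)/f'(x) = 1 - 2c₂e + (6c₂² - 3c₃)e² + O(e³)`. Multiplying the weight
`(3 - t)/2 = 1 + c₂e + (3c₃/2 - 3c₂²)e² + O(e³)` by `f/f'`, the `e²` terms cancel and the `e³`
coefficient is `-(2c₂² + c₃/2)`.
-/

open Filter Asymptotics Topology
open scoped Nat

section PowSub

variable {𝕜 : Type*} [NormedField 𝕜] {a b : 𝕜} {w g : 𝕜 → 𝕜}

theorem ContinuousAt.isBigO_pow_sub_zero (hw : ContinuousAt w a) :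
    w =O[𝓝 a] fun x => (x - a) ^ 0 :=
  (hw.tendsto.isBigO_one 𝕜).congr_right fun _ => (pow_zero _).symm

theorem isBigO_pow_sub_mul_of_continuousAt (hw : ContinuousAt w a) (n : ℕ) :
    (fun x => (x - a) ^ n * w x) =O[𝓝 a] fun x => (x - a) ^ n :=
  ((isBigO_refl _ _).mul hw.isBigO_pow_sub_zero).congr_right fun _ => by rw [pow_zero, mul_one]

theorem isBigO_pow_sub_pow_of_le (a : 𝕜) {m n : ℕ} (h : m ≤ n) :
    (fun x => (x - a) ^ n) =O[𝓝 a] fun x => (x - a) ^ m :=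
  (isBigO_pow_sub_mul_of_continuousAt (w := fun x => (x - a) ^ (n - m))
    (by fun_prop) m).congr_left fun x => by rw [← pow_add, Nat.add_sub_cancel' h]

theorem tendsto_of_isBigO_pow_sub {k : ℕ}
    (hg : (fun x => g x - a) =O[𝓝 b] fun x => (x - b) ^ k) (hk : k ≠ 0) :
    Tendsto g (𝓝 b) (𝓝 a) := by
  refine tendsto_sub_nhds_zero_iff.mp (hg.trans_tendsto ?_)
  simpa [zero_pow hk] using
    ((continuous_id.sub continuous_const).pow k).tendsto b (f := fun x : 𝕜 => (x - b) ^ k)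

end PowSub

def EqUpToOrder {𝕜 : Type*} [NormedField 𝕜] (a : 𝕜) (n : ℕ) (u v : 𝕜 → 𝕜) : Prop :=
  (fun x => u x - v x) =O[𝓝 a] fun x => (x - a) ^ n

namespace EqUpToOrder

variable {𝕜 : Type*} [NormedField 𝕜] {a b : 𝕜} {m n k : ℕ} {u v w u' v' g : 𝕜 → 𝕜}

theorem refl (a : 𝕜) (n : ℕ) (u : 𝕜 → 𝕜) : EqUpToOrder a n u u := by
  simp [EqUpToOrder, isBigO_zero]

theorem symm (h : EqUpToOrder a n u v) : EqUpToOrder a n v u :=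
  h.neg_left.congr_left fun _ => neg_sub _ _

theorem trans (h : EqUpToOrder a n u v) (h' : EqUpToOrder a n v w) : EqUpToOrder a n u w :=
  (h.add h').congr_left fun _ => sub_add_sub_cancel _ _ _

theorem congr (h : EqUpToOrder a n u v) (hu : ∀ x, u x = u' x) (hv : ∀ x, v x = v' x) :
    EqUpToOrder a n u' v' :=
  h.congr_left fun x => by rw [hu, hv]

theorem of_le (h : EqUpToOrder a n u v) (hmn : m ≤ n) : EqUpToOrder a m u v :=
  IsBigO.trans h (isBigO_pow_sub_pow_of_le a hmn)

theorem of_sub_eq_pow_mul (hw : ContinuousAt w a) (h : ∀ x, u x - v x = (x - a) ^ n * w x) :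
    EqUpToOrder a n u v :=
  (isBigO_pow_sub_mul_of_continuousAt hw n).congr_left fun x => (h x).symm

theorem add (h : EqUpToOrder a n u v) (h' : EqUpToOrder a n u' v') :
    EqUpToOrder a n (fun x => u x + u' x) (fun x => v x + v' x) :=
  (IsBigO.add h h').congr_left fun _ => by ring

theorem sub (h : EqUpToOrder a n u v) (h' : EqUpToOrder a n u' v') :
    EqUpToOrder a n (fun x => u x - u' x) (fun x => v x - v' x) :=
  (IsBigO.sub h h').congr_left fun _ => by ring

theorem const_mul (h : EqUpToOrder a n u v) (c : 𝕜) :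
    EqUpToOrder a n (fun x => c * u x) (fun x => c * v x) :=
  (IsBigO.const_mul_left h c).congr_left fun _ => by ring

theorem mul_right (h : EqUpToOrder a n u v) (hw : w =O[𝓝 a] fun x => (x - a) ^ k) :
    EqUpToOrder a (n + k) (fun x => u x * w x) (fun x => v x * w x) :=
  (IsBigO.mul h hw).congr (fun _ => by ring) fun _ => (pow_add _ _ _).symm

theorem mul_left (h : EqUpToOrder a n u v) (hw : w =O[𝓝 a] fun x => (x - a) ^ k) :
    EqUpToOrder a (k + n) (fun x => w x * u x) (fun x => w x * v x) :=
  (hw.mul h).congr (fun _ => by ring) fun _ => (pow_add _ _ _).symm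

theorem isBigO (h : EqUpToOrder a n u v) (hv : v =O[𝓝 a] fun x => (x - a) ^ k) (hk : k ≤ n) :
    u =O[𝓝 a] fun x => (x - a) ^ k :=
  (IsBigO.add (h.of_le hk) hv).congr_left fun _ => by ring

theorem div (h : EqUpToOrder a n u fun x => v x * w x) (hv : ContinuousAt v a) (hva : v a ≠ 0) :
    EqUpToOrder a n (fun x => u x / v x) w := by
  refine (h.mul_right (w := fun x => (v x)⁻¹) (hv.inv₀ hva).isBigO_pow_sub_zero).congr' ?_
    (.of_eq rfl)
  filter_upwards [hv.eventually_ne hva] with x hx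
  field_simp

theorem comp (h : EqUpToOrder a n u v) (hg : (fun x => g x - a) =O[𝓝 b] fun x => (x - b) ^ k)
    (hk : k ≠ 0) : EqUpToOrder b (k * n) (fun x => u (g x)) (fun x => v (g x)) :=
  ((h.comp_tendsto (tendsto_of_isBigO_pow_sub hg hk)).trans (hg.pow n)).congr_right
    fun _ => (pow_mul _ _ _).symm

end EqUpToOrder

theorem AnalyticAt.eqUpToOrder_taylor {𝕜 : Type*} [NontriviallyNormedField 𝕜] [CharZero 𝕜]
    [CompleteSpace 𝕜] {f : 𝕜 → 𝕜} {a : 𝕜} (hf : AnalyticAt 𝕜 f a) (n : ℕ) :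
    EqUpToOrder a n f fun x => ∑ i ∈ Finset.range n, iteratedDeriv i f a / i ! * (x - a) ^ i := by
  have hshift : AnalyticAt 𝕜 (fun z => f (a + z)) 0 := by
    rw [← add_zero a] at hf
    exact hf.comp (analyticAt_const.add analyticAt_id)
  obtain ⟨F, hF, hfF⟩ := hshift.exists_eq_sum_add_pow_mul n
  refine .of_sub_eq_pow_mul (w := fun x => F (x - a)) ?_ fun x => ?_
  · exact ContinuousAt.comp (f := fun x => x - a) (by rw [sub_self]; exact hF.continuousAt)
      (by fun_prop)
  · simp only [iteratedDeriv_comp_const_add, add_zero, smul_eq_mul] at hfF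
    rw [← add_sub_cancel a x, hfF (x - a), add_sub_cancel_left, add_sub_right_comm, ← Finset.sum_sub_distrib, Finset.sum_eq_zero fun i _ => by ring,
      zero_add]

noncomputable def normalizedTaylorCoeff {𝕜 : Type*} [NontriviallyNormedField 𝕜] (f : 𝕜 → 𝕜)
    (a : 𝕜) (h : ℕ) : 𝕜 :=
  iteratedDeriv h f a / ((h ! : 𝕜) * deriv f a)

theorem factorial_mul_deriv_mul_normalizedTaylorCoeff {𝕜 : Type*} [NontriviallyNormedField 𝕜]
    [CharZero 𝕜] {f : 𝕜 → 𝕜} {a : 𝕜} (hder : deriv f a ≠ 0) (h : ℕ) :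
    h ! * deriv f a * normalizedTaylorCoeff f a h = iteratedDeriv h f a := by
  have : (h ! : 𝕜) ≠ 0 := Nat.cast_ne_zero.mpr h.factorial_ne_zero
  unfold normalizedTaylorCoeff
  field_simp

noncomputable def newtonStep {𝕜 : Type*} [NontriviallyNormedField 𝕜] (f : 𝕜 → 𝕜) (x : 𝕜) : 𝕜 :=
  x - f x / deriv f x

theorem AnalyticAt.div_deriv_isBigO {𝕜 : Type*} [NontriviallyNormedField 𝕜] [CompleteSpace 𝕜]
    {f : 𝕜 → 𝕜} {α : 𝕜} (hf : AnalyticAt 𝕜 f α) (hroot : f α = 0) (hder : deriv f α ≠ 0) :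
    (fun x => f x / deriv f x) =O[𝓝 α] fun x => (x - α) ^ 1 := by
  simpa [hroot, div_eq_mul_inv] using
    hf.differentiableAt.isBigO_sub.mul (hf.deriv.continuousAt.inv₀ hder).isBigO_pow_sub_zero

namespace AnalyticAt

variable {𝕜 : Type*} [NontriviallyNormedField 𝕜] [CharZero 𝕜] [CompleteSpace 𝕜]
  {f : 𝕜 → 𝕜} {α : 𝕜}

local notation "c₂" => normalizedTaylorCoeff f α 2
local notation "c₃" => normalizedTaylorCoeff f α 3

theorem eqUpToOrder_four_of_eq_zero (hf : AnalyticAt 𝕜 f α) (hroot : f α = 0)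
    (hder : deriv f α ≠ 0) :
    EqUpToOrder α 4 f fun x => deriv f α * ((x - α) + c₂ * (x - α) ^ 2 + c₃ * (x - α) ^ 3) := by
  refine (hf.eqUpToOrder_taylor 4).congr (fun _ => rfl) fun x => ?_
  simp only [Finset.sum_range_succ, Finset.sum_range_zero, iteratedDeriv_zero, iteratedDeriv_one,
    hroot, ← factorial_mul_deriv_mul_normalizedTaylorCoeff hder 2,
    ← factorial_mul_deriv_mul_normalizedTaylorCoeff hder 3]
  simp [Nat.factorial]
  ring

theorem deriv_eqUpToOrder_three (hf : AnalyticAt 𝕜 f α) (hder : deriv f α ≠ 0) :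
    EqUpToOrder α 3 (deriv f)
      fun x => deriv f α * (1 + 2 * c₂ * (x - α) + 3 * c₃ * (x - α) ^ 2) := by
  refine (hf.deriv.eqUpToOrder_taylor 3).congr (fun _ => rfl) fun x => ?_
  simp only [Finset.sum_range_succ, Finset.sum_range_zero, ← iteratedDeriv_succ',
    ← factorial_mul_deriv_mul_normalizedTaylorCoeff hder 2,
    ← factorial_mul_deriv_mul_normalizedTaylorCoeff hder 3]
  simp [Nat.factorial]
  ring

theorem deriv_eqUpToOrder_two (hf : AnalyticAt 𝕜 f α) (hder : deriv f α ≠ 0) :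
    EqUpToOrder α 2 (deriv f) fun x => deriv f α * (1 + 2 * c₂ * (x - α)) :=
  ((hf.deriv_eqUpToOrder_three hder).of_le (by norm_num)).trans <|
    .of_sub_eq_pow_mul (w := fun _ => 3 * deriv f α * c₃) (by fun_prop) fun x => by ring

theorem div_deriv_eqUpToOrder_four (hf : AnalyticAt 𝕜 f α) (hroot : f α = 0)
    (hder : deriv f α ≠ 0) :
    EqUpToOrder α 4 (fun x => f x / deriv f x)
      fun x => (x - α) - c₂ * (x - α) ^ 2 + (2 * c₂ ^ 2 - 2 * c₃) * (x - α) ^ 3 := by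
  have hU : (fun x => (x - α) - c₂ * (x - α) ^ 2 + (2 * c₂ ^ 2 - 2 * c₃) * (x - α) ^ 3)
      =O[𝓝 α] fun x => (x - α) ^ 1 :=
    (isBigO_pow_sub_mul_of_continuousAt (by fun_prop) 1
      (w := fun x => 1 - c₂ * (x - α) + (2 * c₂ ^ 2 - 2 * c₃) * (x - α) ^ 2)).congr_left
      fun x => by ring
  refine EqUpToOrder.div ?_ hf.deriv.continuousAt hder
  refine (hf.eqUpToOrder_four_of_eq_zero hroot hder).trans
    (.trans ?_ ((hf.deriv_eqUpToOrder_three hder).mul_right hU).symm)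
  exact .of_sub_eq_pow_mul (by fun_prop) (w := fun x =>
    -deriv f α * ((4 * c₂ ^ 3 - 7 * c₂ * c₃) + (6 * c₂ ^ 2 * c₃ - 6 * c₃ ^ 2) * (x - α)))
    fun x => by ring

theorem newtonStep_sub_eqUpToOrder_three (hf : AnalyticAt 𝕜 f α) (hroot : f α = 0)
    (hder : deriv f α ≠ 0) :
    EqUpToOrder α 3 (fun x => newtonStep f x - α) fun x => c₂ * (x - α) ^ 2 :=
  (((EqUpToOrder.refl α 3 fun x => x - α).sub
    ((hf.div_deriv_eqUpToOrder_four hroot hder).of_le (by norm_num))).congr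
    (fun x => by unfold newtonStep; ring) fun _ => rfl).trans <|
    .of_sub_eq_pow_mul (w := fun _ => 2 * c₃ - 2 * c₂ ^ 2) (by fun_prop) fun x => by ring

theorem deriv_newtonStep_div_deriv_eqUpToOrder_three (hf : AnalyticAt 𝕜 f α) (hroot : f α = 0)
    (hder : deriv f α ≠ 0) :
    EqUpToOrder α 3 (fun x => deriv f (newtonStep f x) / deriv f x)
      fun x => 1 - 2 * c₂ * (x - α) + (6 * c₂ ^ 2 - 3 * c₃) * (x - α) ^ 2 := by
  have hy := hf.newtonStep_sub_eqUpToOrder_three hroot hder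
  have hyO : (fun x => newtonStep f x - α) =O[𝓝 α] fun x => (x - α) ^ 2 :=
    hy.isBigO (isBigO_const_mul_self _ _ _) (by norm_num)
  have hT : (fun x => 1 - 2 * c₂ * (x - α) + (6 * c₂ ^ 2 - 3 * c₃) * (x - α) ^ 2)
      =O[𝓝 α] fun x => (x - α) ^ 0 :=
    ContinuousAt.isBigO_pow_sub_zero (by fun_prop)
  have hfy : EqUpToOrder α 3 (fun x => deriv f (newtonStep f x))
      fun x => deriv f α * (1 + 2 * c₂ * (newtonStep f x - α)) :=
    ((hf.deriv_eqUpToOrder_two hder).comp hyO two_ne_zero).of_le (by norm_num)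
  have hfy' : EqUpToOrder α 3 (fun x => deriv f α * (1 + 2 * c₂ * (newtonStep f x - α)))
      fun x => deriv f α * (1 + 2 * c₂ ^ 2 * (x - α) ^ 2) :=
    ((hy.const_mul (2 * deriv f α * c₂)).add (.refl α 3 fun _ => deriv f α)).congr
      (fun x => by ring) fun x => by ring
  refine EqUpToOrder.div ?_ hf.deriv.continuousAt hder
  refine (hfy.trans hfy').trans (.trans ?_ ((hf.deriv_eqUpToOrder_three hder).mul_right hT).symm)
  exact .of_sub_eq_pow_mul (by fun_prop) (w := fun x =>
    -deriv f α * ((12 * c₂ ^ 3 - 12 * c₂ * c₃) + (18 * c₂ ^ 2 * c₃ - 9 * c₃ ^ 2) * (x - α)))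
    fun x => by ring

end AnalyticAt

/-- Chun's method `F(x) = x - (1/2)·(3 - f'(y(x))/f'(x))·f(x)/f'(x)`,
`y(x) = x - f(x)/f'(x)`, is of third order:
`F(x) - α = (2c₂² + c₃/2)·(x - α)³ + O((x - α)⁴)` as `x → α`;
moreover it is the weighted Newton method with weight `A(t) = (3 - t)/2`. -/
theorem third_order_chun
    (f : ℝ → ℝ) (α : ℝ)
    (hf : AnalyticAt ℝ f α) (hroot : f α = 0) (hder : deriv f α ≠ 0) :
    let c₂ := iteratedDeriv 2 f α / ((Nat.factorial 2 : ℝ) * deriv f α)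
    let c₃ := iteratedDeriv 3 f α / ((Nat.factorial 3 : ℝ) * deriv f α)
    let y : ℝ → ℝ := fun x => x - f x / deriv f x
    let F : ℝ → ℝ := fun x =>
      x - (1/2) * (3 - deriv f (y x) / deriv f x) * (f x / deriv f x)
    let A : ℝ → ℝ := fun t => (3 - t) / 2
    ((fun x => F x - α - (2 * c₂^2 + c₃/2) * (x - α)^3)
      =O[nhds α] (fun x => (x - α)^4)) ∧
    (∀ x, deriv f x ≠ 0 →
      F x = x - A (deriv f (y x) / deriv f x) * (f x / deriv f x)) := by
  refine ⟨?_, fun x _ => by ring⟩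
  set c₂ := normalizedTaylorCoeff f α 2
  set c₃ := normalizedTaylorCoeff f α 3
  have hu := hf.div_deriv_eqUpToOrder_four hroot hder
  have hweight : EqUpToOrder α 3 (fun x => (3 - deriv f (newtonStep f x) / deriv f x) / 2)
      fun x => 1 + c₂ * (x - α) + (3 / 2 * c₃ - 3 * c₂ ^ 2) * (x - α) ^ 2 :=
    (((hf.deriv_newtonStep_div_deriv_eqUpToOrder_three hroot hder).const_mul (-1 / 2)).add
      (.refl α 3 fun _ => 3 / 2)).congr (fun x => by ring) fun x => by ring
  have hweightO : (fun x => 1 + c₂ * (x - α) + (3 / 2 * c₃ - 3 * c₂ ^ 2) * (x - α) ^ 2)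
      =O[𝓝 α] fun x => (x - α) ^ 0 :=
    ContinuousAt.isBigO_pow_sub_zero (by fun_prop)
  have hstep := (hweight.mul_right (hf.div_deriv_isBigO hroot hder)).trans (hu.mul_left hweightO)
  have hchun := ((EqUpToOrder.refl α 4 fun x => x - α).sub hstep).trans <|
    .of_sub_eq_pow_mul (by fun_prop) (w := fun x => -((5 * c₂ ^ 3 - 7 / 2 * c₂ * c₃)
      + (3 / 2 * c₃ - 3 * c₂ ^ 2) * (2 * c₂ ^ 2 - 2 * c₃) * (x - α)))
      (v := fun x => (2 * c₂ ^ 2 + c₃ / 2) * (x - α) ^ 3) fun x => by ring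
  exact hchun.congr (fun x => by unfold newtonStep; ring) fun _ => rfl
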